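/- Let k ≤ n, r ≤ k-1, and τ(x,y) = k·((y - x) mod' n) + x. For any permutations φ ∈ S_k and ψ ∈ S_n, the map τ_{φ,ψ} defined by τ_{φ,ψ}(x,y) = τ(φ⁻¹(x), ψ⁻¹(y)) is an r-good cyclic ordering of [k] × [n]. -/
import Mathlib


open Finset

/-- The set of `r` cyclically consecutive residues modulo `m`, starting at `s`. -/
def cyc (m s r : ℕ) : Finset ℕ := (Finset.range r).image fun i => (s + i) % m

/-- `A` meets the cyclic ordering `σ`: the `σ`-values of the elements of `A` are
consecutive in the cyclic sense modulo `m`. -/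
def Meets {α : Type*} [DecidableEq α] (m : ℕ) (σ : α → ℕ) (A : Finset α) : Prop :=
  ∃ s : ℕ, A.image (fun a => σ a % m) = cyc m s A.card

/-- A family of sets is intersecting if every two of its members intersect. -/
def Intersecting {β : Type*} [DecidableEq β] (𝒜 : Finset (Finset β)) : Prop :=
  ∀ A ∈ 𝒜, ∀ B ∈ 𝒜, (A ∩ B).Nonempty

/-- The family `𝒫_{k,r,n}` of generalised permutations: all `r`-subsets of
`[k] × [n]` with pairwise distinct first coordinates and pairwise distinct
second coordinates. -/
def genPerms (k r n : ℕ) : Finset (Finset (ℕ × ℕ)) :=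
  (Finset.Icc 1 k ×ˢ Finset.Icc 1 n).powerset.filter fun A =>
    A.card = r ∧ (∀ p ∈ A, ∀ q ∈ A, p.1 = q.1 → p = q) ∧
      (∀ p ∈ A, ∀ q ∈ A, p.2 = q.2 → p = q)

/-- The representative of `a` modulo `n` lying in `{1, …, n}`. -/
def mod1 (a : ℤ) (n : ℕ) : ℕ := ((a - 1) % (n : ℤ) + 1).toNat

/-- The cyclic ordering `τ(x,y) = k·((y - x) mod' n) + x`. -/
def tau (k n : ℕ) (p : ℕ × ℕ) : ℕ := k * mod1 ((p.2 : ℤ) - (p.1 : ℤ)) n + p.1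

/-- `σ` is an `r`-good cyclic ordering of `[k] × [n]`: any `r` elements numbered
consecutively in the cyclic sense by `σ` form a generalised permutation, i.e. they
have pairwise distinct first coordinates and pairwise distinct second coordinates. -/
def IsGood (k n r : ℕ) (σ : ℕ × ℕ → ℕ) : Prop :=
  ∀ A : Finset (ℕ × ℕ), A ⊆ Finset.Icc 1 k ×ˢ Finset.Icc 1 n → A.card = r →
    Meets (k * n) σ A → A ∈ genPerms k r n

/-- A permutation of `Fin k` regarded as a permutation of `[k] = {1, …, k} ⊆ ℕ`. -/
def liftPerm (k : ℕ) (φ : Equiv.Perm (Fin k)) (x : ℕ) : ℕ :=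
  if h : 1 ≤ x ∧ x - 1 < k then (φ ⟨x - 1, h.2⟩).val + 1 else x

/-- The cyclic ordering `τ_{φ,ψ}(x,y) = τ(φ⁻¹(x), ψ⁻¹(y))`. -/
def tauPerm (k n : ℕ) (φ : Equiv.Perm (Fin k)) (ψ : Equiv.Perm (Fin n)) (p : ℕ × ℕ) : ℕ :=
  tau k n (liftPerm k φ.symm p.1, liftPerm n ψ.symm p.2)

lemma mod1_int (a : ℤ) (n : ℕ) (hn : 0 < n) : (mod1 a n : ℤ) = (a - 1) % n + 1 := by
  have h1 : (0:ℤ) ≤ (a-1) % n := Int.emod_nonneg _ (by exact_mod_cast hn.ne')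
  rw [mod1, Int.toNat_of_nonneg (by omega)]

lemma mod1_dvd (a : ℤ) (n : ℕ) (hn : 0 < n) : (n:ℤ) ∣ (mod1 a n : ℤ) - a := by
  rw [mod1_int a n hn]
  have h := Int.emod_def (a-1) (n:ℤ)
  exact ⟨-((a-1)/n), by linarith⟩

lemma tau_dvd (k n : ℕ) (hn : 0 < n) (x y : ℕ) :
    ((k:ℤ)*n) ∣ (tau k n (x,y) : ℤ) - ((k:ℤ)*((y:ℤ) - x) + x) := by
  obtain ⟨c, hc⟩ := mod1_dvd ((y:ℤ) - x) n hn
  refine ⟨c, ?_⟩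
  have ht : (tau k n (x,y) : ℤ) = (k:ℤ) * (mod1 ((y:ℤ)-(x:ℤ)) n : ℤ) + x := by
    simp [tau]
  rw [ht]; linear_combination (k:ℤ) * hc

lemma liftPerm_bounds {k : ℕ} (φ : Equiv.Perm (Fin k)) {x : ℕ} (h1 : 1 ≤ x) (h2 : x ≤ k) :
    1 ≤ liftPerm k φ x ∧ liftPerm k φ x ≤ k := by
  have hx : 1 ≤ x ∧ x - 1 < k := ⟨h1, by omega⟩
  rw [liftPerm, dif_pos hx]
  have := (φ ⟨x-1, hx.2⟩).isLt
  omega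

lemma liftPerm_injOn {k : ℕ} (φ : Equiv.Perm (Fin k)) {x y : ℕ}
    (hx1 : 1 ≤ x) (hx2 : x ≤ k) (hy1 : 1 ≤ y) (hy2 : y ≤ k)
    (h : liftPerm k φ x = liftPerm k φ y) : x = y := by
  have hx : 1 ≤ x ∧ x - 1 < k := ⟨hx1, by omega⟩
  have hy : 1 ≤ y ∧ y - 1 < k := ⟨hy1, by omega⟩
  rw [liftPerm, dif_pos hx, liftPerm, dif_pos hy] at h
  have h' : φ ⟨x-1, hx.2⟩ = φ ⟨y-1, hy.2⟩ := Fin.ext (by omega)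
  have h'' := φ.injective h'
  simp only [Fin.mk.injEq] at h''
  omega

lemma key (k n : ℕ) (hk : 2 ≤ k) (hkn : k ≤ n)
    (x₁ y₁ x₂ y₂ : ℕ)
    (hx₁ : 1 ≤ x₁ ∧ x₁ ≤ k) (hy₁ : 1 ≤ y₁ ∧ y₁ ≤ n)
    (hx₂ : 1 ≤ x₂ ∧ x₂ ≤ k) (hy₂ : 1 ≤ y₂ ∧ y₂ ≤ n)
    (d : ℤ) (hd : |d| ≤ (k:ℤ) - 2)
    (hcong : ((k:ℤ)*n) ∣ ((tau k n (x₁,y₁) : ℤ) - (tau k n (x₂,y₂) : ℤ) - d))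
    (h : x₁ = x₂ ∨ y₁ = y₂) : x₁ = x₂ ∧ y₁ = y₂ := by
  have hn : 0 < n := by omega
  have hdabs := abs_le.mp hd
  obtain ⟨c1, hc1⟩ := tau_dvd k n hn x₁ y₁
  obtain ⟨c2, hc2⟩ := tau_dvd k n hn x₂ y₂
  obtain ⟨c0, hc0⟩ := hcong
  rcases h with h | h
  · -- same x: show y₁ = y₂
    subst h
    have hdvd : ((k:ℤ)*n) ∣ (k:ℤ)*((y₁:ℤ) - y₂) - d :=
      ⟨c0 - c1 + c2, by linear_combination hc0 - hc1 + hc2⟩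
    have hkd : (k:ℤ) ∣ d := by
      have h5 : (k:ℤ) ∣ (k:ℤ)*((y₁:ℤ) - y₂) - d := (dvd_mul_right (k:ℤ) (n:ℤ)).trans hdvd
      have h6 := dvd_sub (dvd_mul_right (k:ℤ) ((y₁:ℤ) - y₂)) h5
      simpa using h6
    have hd0 : d = 0 := Int.eq_zero_of_abs_lt_dvd hkd (by omega)
    subst hd0
    rw [sub_zero] at hdvd
    have hnd : (n:ℤ) ∣ (y₁:ℤ) - y₂ :=
      (mul_dvd_mul_iff_left (show (k:ℤ) ≠ 0 by positivity)).mp hdvd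
    have : (y₁:ℤ) - y₂ = 0 := Int.eq_zero_of_abs_lt_dvd hnd (by rw [abs_lt]; omega)
    omega
  · -- same y: show x₁ = x₂
    subst h
    have hdvd : ((k:ℤ)*n) ∣ ((k:ℤ)-1)*((x₁:ℤ) - x₂) + d :=
      ⟨-c0 + c1 - c2, by linear_combination -hc0 + hc1 - hc2⟩
    have habs : |((k:ℤ)-1)*((x₁:ℤ) - x₂) + d| < (k:ℤ)*n := by
      have h1 : |((k:ℤ)-1)*((x₁:ℤ) - x₂) + d| ≤ |((k:ℤ)-1)*((x₁:ℤ) - x₂)| + |d| :=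
        abs_add_le _ _
      have h2 : |((k:ℤ)-1)*((x₁:ℤ) - x₂)| = ((k:ℤ)-1) * |(x₁:ℤ) - x₂| := by
        rw [abs_mul, abs_of_nonneg (by omega : (0:ℤ) ≤ (k:ℤ)-1)]
      have h3 : |(x₁:ℤ) - x₂| ≤ (k:ℤ) - 1 := by rw [abs_le]; omega
      have h4 : ((k:ℤ)-1) * |(x₁:ℤ) - x₂| ≤ ((k:ℤ)-1) * ((k:ℤ)-1) :=
        mul_le_mul_of_nonneg_left h3 (by omega)
      have h5 : (k:ℤ)*(k:ℤ) ≤ (k:ℤ)*n := by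
        have : (k:ℤ) ≤ n := by exact_mod_cast hkn
        nlinarith
      nlinarith
    have heq : ((k:ℤ)-1)*((x₁:ℤ) - x₂) + d = 0 := Int.eq_zero_of_abs_lt_dvd hdvd habs
    have he0 : (x₁:ℤ) - x₂ = 0 := by
      by_contra h0
      have h1 : 1 ≤ |(x₁:ℤ) - x₂| := Int.one_le_abs h0
      have h2 : |d| = ((k:ℤ)-1) * |(x₁:ℤ) - x₂| := by
        have hde : d = -(((k:ℤ)-1)*((x₁:ℤ) - x₂)) := by linarith
        rw [hde, abs_neg, abs_mul, abs_of_nonneg (by omega : (0:ℤ) ≤ (k:ℤ)-1)]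
      nlinarith
    omega


/-- For any `φ ∈ S_k`, `ψ ∈ S_n`, the ordering `τ_{φ,ψ}` is an
`r`-good cyclic ordering of `[k] × [n]`. -/
theorem tauPerm_isGood (k r n : ℕ) (hr1 : 1 ≤ r) (hr : r ≤ k - 1) (hkn : k ≤ n)
    (φ : Equiv.Perm (Fin k)) (ψ : Equiv.Perm (Fin n)) :
    IsGood k n r (tauPerm k n φ ψ) := by
  intro A hA hcard hmeets
  have hk : 2 ≤ k := by omega
  have hn : 0 < n := by omega
  obtain ⟨s, hs⟩ := hmeets
  rw [hcard] at hs
  have hmem : ∀ p ∈ A, ∃ i, i < r ∧ tauPerm k n φ ψ p % (k*n) = (s+i) % (k*n) := by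
    intro p hp
    have hmem' : tauPerm k n φ ψ p % (k*n) ∈ cyc (k*n) s r := by
      rw [← hs]; exact mem_image_of_mem _ hp
    simp only [cyc, mem_image, mem_range] at hmem'
    obtain ⟨i, hi, hiq⟩ := hmem'
    exact ⟨i, hi, hiq.symm⟩
  have main : ∀ p ∈ A, ∀ q ∈ A, (p.1 = q.1 ∨ p.2 = q.2) → p = q := by
    intro p hp q hq hpq
    have hpmem := hA hp
    have hqmem := hA hq
    rw [Finset.mem_product, Finset.mem_Icc, Finset.mem_Icc] at hpmem hqmem
    obtain ⟨i, hi, hip⟩ := hmem p hp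
    obtain ⟨j, hj, hjq⟩ := hmem q hq
    have hx₁ := liftPerm_bounds φ.symm hpmem.1.1 hpmem.1.2
    have hy₁ := liftPerm_bounds ψ.symm hpmem.2.1 hpmem.2.2
    have hx₂ := liftPerm_bounds φ.symm hqmem.1.1 hqmem.1.2
    have hy₂ := liftPerm_bounds ψ.symm hqmem.2.1 hqmem.2.2
    have h1 : ((tauPerm k n φ ψ p : ℕ) : ℤ) ≡ ((s+i : ℕ) : ℤ) [ZMOD ((k*n : ℕ) : ℤ)] :=
      Int.natCast_modEq_iff.mpr hip
    have h2 : ((tauPerm k n φ ψ q : ℕ) : ℤ) ≡ ((s+j : ℕ) : ℤ) [ZMOD ((k*n : ℕ) : ℤ)] :=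
      Int.natCast_modEq_iff.mpr hjq
    obtain ⟨c, hc⟩ := (h1.sub h2).dvd
    have hcong : ((k:ℤ)*n) ∣ ((tau k n (liftPerm k φ.symm p.1, liftPerm n ψ.symm p.2) : ℤ)
        - (tau k n (liftPerm k φ.symm q.1, liftPerm n ψ.symm q.2) : ℤ) - ((i:ℤ) - j)) := by
      refine ⟨-c, ?_⟩
      have e1 : tauPerm k n φ ψ p = tau k n (liftPerm k φ.symm p.1, liftPerm n ψ.symm p.2) := rfl
      have e2 : tauPerm k n φ ψ q = tau k n (liftPerm k φ.symm q.1, liftPerm n ψ.symm q.2) := rfl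
      rw [e1, e2] at hc
      push_cast at hc ⊢
      linarith
    have hd : |(i:ℤ) - j| ≤ (k:ℤ) - 2 := by rw [abs_le]; omega
    have hor : liftPerm k φ.symm p.1 = liftPerm k φ.symm q.1 ∨
        liftPerm n ψ.symm p.2 = liftPerm n ψ.symm q.2 :=
      hpq.imp (fun h => by rw [h]) (fun h => by rw [h])
    have hkey := key k n hk hkn _ _ _ _ hx₁ hy₁ hx₂ hy₂ ((i:ℤ) - j) hd hcong hor
    have hp1 : p.1 = q.1 := liftPerm_injOn φ.symm hpmem.1.1 hpmem.1.2 hqmem.1.1 hqmem.1.2 hkey.1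
    have hp2 : p.2 = q.2 := liftPerm_injOn ψ.symm hpmem.2.1 hpmem.2.2 hqmem.2.1 hqmem.2.2 hkey.2
    exact Prod.ext hp1 hp2
  rw [genPerms, mem_filter, mem_powerset]
  exact ⟨hA, hcard, fun p hp q hq h => main p hp q hq (Or.inl h),
    fun p hp q hq h => main p hp q hq (Or.inr h)⟩
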